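/- Binary example, secret-key rate: Let X be uniform on {0,1}; let Y = X if E₁ = 0 and Y = e (erasure) if E₁ = 1, where E₁ ~ Bernoulli(p); let Z = Y if E₂ = 0 and Z = e if E₂ = 1, where E₂ ~ Bernoulli(q); and let V = X ⊕ N where N ~ Bernoulli(α) with α ∈ [0,1/2]; X, E₁, E₂, N mutually independent. Then I(V;Y) − I(V;Z) = q(1−p)(1 − h(α)). -/

import Mathlib

open Finset Real

/- Probability mass of the event `X = x` under the pmf `μ` on a finite sample space. -/
open Classical in
noncomputable def pmass {Ω α : Type*} [Fintype Ω] (μ : Ω → ℝ) (X : Ω → α) (x : α) : ℝ :=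
  ∑ ω, if X ω = x then μ ω else 0

/-- Shannon entropy (in bits) of the random variable `X` under the pmf `μ`. -/
noncomputable def ent {Ω α : Type*} [Fintype Ω] [Fintype α] (μ : Ω → ℝ) (X : Ω → α) : ℝ :=
  ∑ x, -(pmass μ X x * Real.logb 2 (pmass μ X x))

/-- Conditional Shannon entropy `H(X | Y)` (in bits). -/
noncomputable def condEnt {Ω α β : Type*} [Fintype Ω] [Fintype α] [Fintype β]
    (μ : Ω → ℝ) (X : Ω → α) (Y : Ω → β) : ℝ :=
  ent μ (fun ω => (X ω, Y ω)) - ent μ Y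

/-- Mutual information `I(X;Y)` (in bits). -/
noncomputable def mutInf {Ω α β : Type*} [Fintype Ω] [Fintype α] [Fintype β]
    (μ : Ω → ℝ) (X : Ω → α) (Y : Ω → β) : ℝ :=
  ent μ X + ent μ Y - ent μ (fun ω => (X ω, Y ω))

/-- Conditional mutual information `I(X;Y|Z)` (in bits). -/
noncomputable def condMutInf {Ω α β γ : Type*} [Fintype Ω] [Fintype α] [Fintype β] [Fintype γ]
    (μ : Ω → ℝ) (X : Ω → α) (Y : Ω → β) (Z : Ω → γ) : ℝ :=
  ent μ (fun ω => (X ω, Z ω)) + ent μ (fun ω => (Y ω, Z ω))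
    - ent μ (fun ω => (X ω, Y ω, Z ω)) - ent μ Z

/- Probability of the event `A` under the pmf `μ`. -/
open Classical in
noncomputable def prob {Ω : Type*} [Fintype Ω] (μ : Ω → ℝ) (A : Ω → Prop) : ℝ :=
  ∑ ω, if A ω then μ ω else 0

/-- `μ` is a probability mass function on the finite set `Ω`. -/
def IsPMF {Ω : Type*} [Fintype Ω] (μ : Ω → ℝ) : Prop :=
  (∀ ω, 0 ≤ μ ω) ∧ ∑ ω, μ ω = 1

/-- Binary entropy function (bits). -/
noncomputable def binH (t : ℝ) : ℝ :=
  -(t * Real.logb 2 t) - (1 - t) * Real.logb 2 (1 - t)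
/-- Joint pmf of `(X, E₁, E₂, N)`: `X ∼ Bernoulli(1/2)`, `E₁ ∼ Bernoulli(p)`,
`E₂ ∼ Bernoulli(q)`, `N ∼ Bernoulli(α)`, mutually independent. -/
noncomputable def binDist (p q α : ℝ) : Bool × Bool × Bool × Bool → ℝ :=
  fun ω => (1 / 2 : ℝ) * (if ω.2.1 = true then p else 1 - p) *
    (if ω.2.2.1 = true then q else 1 - q) * (if ω.2.2.2 = true then α else 1 - α)

/-- The source `X`. -/
def Xb (ω : Bool × Bool × Bool × Bool) : Bool := ω.1

/-- `Y = X` if `E₁ = 0`, and `Y = e` (erasure) if `E₁ = 1`. -/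
def Yb (ω : Bool × Bool × Bool × Bool) : Option Bool :=
  if ω.2.1 = true then none else some ω.1

/-- `Z = Y` if `E₂ = 0`, and `Z = e` (erasure) if `E₂ = 1`. -/
def Zb (ω : Bool × Bool × Bool × Bool) : Option Bool :=
  if (ω.2.1 || ω.2.2.1) = true then none else some ω.1

/-- `V = X ⊕ N`. -/
def Vb (ω : Bool × Bool × Bool × Bool) : Bool := xor ω.1 ω.2.2.2

/- Since `X` is uniform, given `V` the observation `Y` is `V` sent through a binary symmetric
channel with crossover probability `α` and then through an erasure channel with erasure
probability `p`. The mutual information across such a cascade is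
(survival probability) × (1 − h(α)): the erased part carries no information, the rest carries
that of the symmetric channel. `Z` is the same cascade with survival probability
`(1 − p)(1 − q)`, and the rate is the difference of the two. -/

lemma neg_mul_logb (b t : ℝ) : -(t * logb b t) = negMulLog t / log b := by
  simp only [negMulLog, logb]; ring

lemma binH_eq_negMulLog (t : ℝ) : binH t = (negMulLog t + negMulLog (1 - t)) / log 2 := by
  simp only [binH, logb, negMulLog]; ring

lemma negMulLog_div_two (x : ℝ) : negMulLog (x / 2) = (negMulLog x + x * log 2) / 2 := by
  rw [div_eq_mul_inv, negMulLog_mul]; simp only [negMulLog, log_inv]; ring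

section FiniteDistribution

variable {Ω α β : Type*} [Fintype Ω] (μ : Ω → ℝ)

lemma ent_eq_sum_negMulLog [Fintype α] (X : Ω → α) :
    ent μ X = (∑ x, negMulLog (pmass μ X x)) / log 2 := by
  simp only [ent, neg_mul_logb, Finset.sum_div]

lemma pmass_eq_sum_pmass_prod_left [Fintype β] (X : Ω → α) (Y : Ω → β) (x : α) :
    pmass μ X x = ∑ y, pmass μ (fun ω => (X ω, Y ω)) (x, y) := by
  classical
  simp only [pmass, Prod.mk.injEq]
  rw [Finset.sum_comm]
  refine Finset.sum_congr rfl fun ω _ => ?_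
  by_cases hx : X ω = x <;> simp [hx]

lemma pmass_eq_sum_pmass_prod_right [Fintype α] (X : Ω → α) (Y : Ω → β) (y : β) :
    pmass μ Y y = ∑ x, pmass μ (fun ω => (X ω, Y ω)) (x, y) := by
  classical
  simp only [pmass, Prod.mk.injEq]
  rw [Finset.sum_comm]
  refine Finset.sum_congr rfl fun ω _ => ?_
  by_cases hy : Y ω = y <;> simp [hy]

end FiniteDistribution

/- Joint pmf of `(V, W)` for a uniform bit `V` and its image `W` under a binary symmetric channel
with crossover probability `α` followed by erasure (`none`) with probability `1 - s`. -/
noncomputable def bscBecJoint (s α : ℝ) : Bool → Option Bool → ℝ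
  | _, none => (1 - s) / 2
  | v, some x => s / 2 * if x = v then 1 - α else α

lemma mutInf_eq_of_pmass_prod_eq_bscBecJoint {Ω : Type*} [Fintype Ω] (μ : Ω → ℝ)
    (V : Ω → Bool) (W : Ω → Option Bool) (s α : ℝ)
    (h : ∀ v w, pmass μ (fun ω => (V ω, W ω)) (v, w) = bscBecJoint s α v w) :
    mutInf μ V W = s * (1 - binH α) := by
  have hV : ∀ v, pmass μ V v = 1 / 2 := fun v => by
    rw [pmass_eq_sum_pmass_prod_left μ V W, Fintype.sum_option, Fintype.sum_bool]
    cases v <;> simp only [h, bscBecJoint, if_true, Bool.false_eq_true, Bool.true_eq_false,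
      if_false] <;> ring
  have hW_none : pmass μ W none = 1 - s := by
    rw [pmass_eq_sum_pmass_prod_right μ V W, Fintype.sum_bool, h, h]
    simp only [bscBecJoint]; ring
  have hW_some : ∀ x, pmass μ W (some x) = s / 2 := fun x => by
    rw [pmass_eq_sum_pmass_prod_right μ V W, Fintype.sum_bool, h, h]
    cases x <;> simp only [bscBecJoint, if_true, Bool.false_eq_true, Bool.true_eq_false,
      if_false] <;> ring
  have hlog : log 2 ≠ 0 := by positivity
  simp only [mutInf, ent_eq_sum_negMulLog, hV, hW_none, hW_some, h, binH_eq_negMulLog,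
    Fintype.sum_prod_type, Fintype.sum_option, Fintype.sum_bool, bscBecJoint, if_true,
    Bool.false_eq_true, Bool.true_eq_false, if_false]
  simp only [negMulLog_mul, negMulLog_div_two, negMulLog_one]
  field_simp
  ring

lemma pmass_Vb_Yb (p q α : ℝ) (v : Bool) (w : Option Bool) :
    pmass (binDist p q α) (fun ω => (Vb ω, Yb ω)) (v, w) = bscBecJoint (1 - p) α v w := by
  rcases w with _ | x <;> cases v <;> try cases x
  all_goals
    simp only [pmass, Fintype.sum_prod_type, Fintype.sum_bool, Vb, Yb, binDist, bscBecJoint,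
      Bool.true_xor, Bool.false_xor, Bool.not_true, Bool.not_false, ↓reduceIte, Prod.mk.injEq,
      Option.some.injEq, reduceCtorEq, and_true, and_false, Bool.false_eq_true,
      Bool.true_eq_false]
    ring

lemma pmass_Vb_Zb (p q α : ℝ) (v : Bool) (w : Option Bool) :
    pmass (binDist p q α) (fun ω => (Vb ω, Zb ω)) (v, w)
      = bscBecJoint ((1 - p) * (1 - q)) α v w := by
  rcases w with _ | x <;> cases v <;> try cases x
  all_goals
    simp only [pmass, Fintype.sum_prod_type, Fintype.sum_bool, Vb, Zb, binDist, bscBecJoint,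
      Bool.or_true, Bool.or_false, Bool.true_xor, Bool.false_xor, Bool.not_true, Bool.not_false,
      ↓reduceIte, Prod.mk.injEq, Option.some.injEq, reduceCtorEq, and_true, and_false,
      Bool.false_eq_true, Bool.true_eq_false]
    ring

theorem binary_keyrate_general (p q α : ℝ) :
    mutInf (binDist p q α) Vb Yb - mutInf (binDist p q α) Vb Zb
      = q * (1 - p) * (1 - binH α) := by
  rw [mutInf_eq_of_pmass_prod_eq_bscBecJoint _ _ _ _ _ (pmass_Vb_Yb p q α),
    mutInf_eq_of_pmass_prod_eq_bscBecJoint _ _ _ _ _ (pmass_Vb_Zb p q α)]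
  ring

/-- **Binary example, secret-key rate.**  With `X ∼ Bernoulli(1/2)`, `Y` an erased
version of `X` (erasure prob. `p`), `Z` an erased version of `Y` (erasure prob. `q`) and
`V = X ⊕ N`, `N ∼ Bernoulli(α)`:  `I(V;Y) − I(V;Z) = q(1−p)(1−h(α))`. -/
theorem binary_keyrate (p q α : ℝ) (hp0 : 0 ≤ p) (hp1 : p ≤ 1) (hq0 : 0 ≤ q) (hq1 : q ≤ 1)
    (hα0 : 0 ≤ α) (hα1 : α ≤ 1 / 2) :
    mutInf (binDist p q α) Vb Yb - mutInf (binDist p q α) Vb Zb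
      = q * (1 - p) * (1 - binH α) :=
  binary_keyrate_general p q α
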